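/- The norm squared of the squeezed-coherent state R(η,ξ)|0⟩ involves the normalization κ(r) = ⟨0| S(ξ)† S(ξ) |0⟩ = ₃F₀(1/2, -N/2, (1-N)/2; ; 4r²) = Σ_{i=0}^{⌊N/2⌋} (1/2)_i (-N/2)_i ((1-N)/2)_i (4r²)^i / i!, where ξ = re^{iγ} and S(ξ) = e^{ξJ+²/2}e^{-ξ̄J-²/2}. -/

import Mathlib

/-!
Since `J₋|0⟩ = 0` and `J₋²` is nilpotent, `e^{-ξ̄J₋²/2}|0⟩ = |0⟩`, so `κ(r)` is the squared norm of
`e^{ξJ₊²/2}|0⟩ = ∑ᵢ (ξ/2)ⁱ/i! · J₊^{2i}|0⟩`. The vectors `J₊^{2i}|0⟩` are orthogonal multiples of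
`|2i⟩` with squared norms `∏_{n<2i} (n+1)(N-n) = 16ⁱ i! (1/2)ᵢ (-N/2)ᵢ ((1-N)/2)ᵢ`, and Pythagoras
turns `∑ᵢ |ξ/2|^{2i}/i!² · ∏_{n<2i} (n+1)(N-n)` into the `₃F₀` series.
-/

/-- The su(2) spin-N/2 raising operator on `ℂ^{N+1}`. -/
noncomputable def Jp (N : ℕ) : Matrix (Fin (N + 1)) (Fin (N + 1)) ℂ :=
  Matrix.of fun i j : Fin (N + 1) =>
    if (i : ℕ) = (j : ℕ) + 1 then (Real.sqrt (((j : ℕ) + 1) * (N - (j : ℕ))) : ℂ) else 0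

/-- The su(2) spin-N/2 lowering operator on `ℂ^{N+1}`. -/
noncomputable def Jm (N : ℕ) : Matrix (Fin (N + 1)) (Fin (N + 1)) ℂ :=
  Matrix.of fun i j : Fin (N + 1) =>
    if (i : ℕ) + 1 = (j : ℕ) then (Real.sqrt ((j : ℕ) * (N - (j : ℕ) + 1)) : ℂ) else 0

/-- The su(2) spin-N/2 diagonal generator on `ℂ^{N+1}`. -/
noncomputable def J3 (N : ℕ) : Matrix (Fin (N + 1)) (Fin (N + 1)) ℂ :=
  Matrix.diagonal fun k : Fin (N + 1) => ((k : ℕ) : ℂ) - (N : ℂ) / 2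

open Finset Matrix
open scoped Nat

theorem NormedSpace.exp_eq_sum_range_of_pow_eq_zero {𝕂 𝔸 : Type*} [Field 𝕂] [CharZero 𝕂]
    [Ring 𝔸] [Algebra 𝕂 𝔸] [TopologicalSpace 𝔸] [IsTopologicalRing 𝔸] {x : 𝔸} {k : ℕ}
    (h : x ^ k = 0) : NormedSpace.exp x = ∑ i ∈ range k, (i !⁻¹ : 𝕂) • x ^ i := by
  rw [NormedSpace.exp_eq_tsum 𝕂]
  exact tsum_eq_sum fun i hi => by
    rw [pow_eq_zero_of_le (by simpa using hi) h, smul_zero]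

theorem Matrix.exp_mulVec_of_mulVec_eq_zero {n 𝕂 : Type*} [Fintype n] [DecidableEq n] [Field 𝕂]
    [CharZero 𝕂] [TopologicalSpace 𝕂] [IsTopologicalRing 𝕂] {X : Matrix n n 𝕂}
    (hX : IsNilpotent X) {v : n → 𝕂} (h : X *ᵥ v = 0) : NormedSpace.exp X *ᵥ v = v := by
  obtain ⟨k, hk⟩ := hX
  rw [NormedSpace.exp_eq_sum_range_of_pow_eq_zero (𝕂 := 𝕂) (pow_eq_zero_of_le k.le_succ hk),
    sum_mulVec, sum_range_succ']
  refine (add_eq_right.2 (sum_eq_zero fun i _ => ?_)).trans (by simp)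
  rw [smul_mulVec, pow_succ, ← mulVec_mulVec, h, mulVec_zero, smul_zero]

/-- The basis vector `|k⟩`, read as `0` for `k > N` so that `J₊|N⟩ = 0` needs no special case. -/
def fockVec (N k : ℕ) : Fin (N + 1) → ℂ := fun j => if (j : ℕ) = k then 1 else 0

lemma fockVec_of_le {N k : ℕ} (h : k ≤ N) : fockVec N k = Pi.single ⟨k, by omega⟩ 1 := by
  ext j
  simp only [Pi.single_apply, fockVec, Fin.ext_iff]

lemma fockVec_zero (N : ℕ) : fockVec N 0 = Pi.single 0 1 :=
  fockVec_of_le N.zero_le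

lemma fockVec_of_lt {N k : ℕ} (h : N < k) : fockVec N k = 0 := by
  ext j
  simp only [fockVec, Pi.zero_apply, ite_eq_right_iff]
  omega

lemma star_fockVec_dotProduct_fockVec {N a : ℕ} (ha : a ≤ N) (b : ℕ) :
    star (fockVec N a) ⬝ᵥ fockVec N b = if a = b then 1 else 0 := by
  rw [fockVec_of_le ha, ← Pi.single_star, star_one, single_dotProduct, one_mul]
  simp only [fockVec]

noncomputable def raisingCoeff (N k : ℕ) : ℝ := Real.sqrt ((k + 1) * (N - k))

lemma Jp_apply (N : ℕ) (i j : Fin (N + 1)) :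
    Jp N i j = if (i : ℕ) = j + 1 then (raisingCoeff N j : ℂ) else 0 := rfl

lemma Jp_mulVec_fockVec (N k : ℕ) :
    Jp N *ᵥ fockVec N k = (raisingCoeff N k : ℂ) • fockVec N (k + 1) := by
  rcases le_or_gt k N with hk | hk
  · ext i
    rw [fockVec_of_le hk, mulVec_single_one]
    simp [Jp_apply, fockVec]
  · rw [fockVec_of_lt hk, fockVec_of_lt (by omega), mulVec_zero, smul_zero]

lemma Jp_pow_mulVec_fockVec (N m k : ℕ) :
    Jp N ^ m *ᵥ fockVec N k =
      ((∏ n ∈ range m, raisingCoeff N (k + n) : ℝ) : ℂ) • fockVec N (k + m) := by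
  induction m with
  | zero => simp
  | succ m ih =>
    rw [pow_succ', ← mulVec_mulVec, ih, mulVec_smul, Jp_mulVec_fockVec, smul_smul,
      prod_range_succ, Complex.ofReal_mul, mul_comm, add_assoc]

lemma Jp_pow_eq_zero (N : ℕ) : Jp N ^ (N + 1) = 0 := by
  refine ext_of_mulVec_single fun j => ?_
  rw [← fockVec_of_le (Nat.lt_succ_iff.1 j.isLt), Jp_pow_mulVec_fockVec,
    fockVec_of_lt (by omega), smul_zero, zero_mulVec]

lemma Jm_eq_conjTranspose_Jp (N : ℕ) : Jm N = (Jp N)ᴴ := by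
  ext i j
  simp only [Jm, conjTranspose_apply, Jp_apply, of_apply, raisingCoeff]
  split_ifs with h₁ h₂ h₂
  · rw [Complex.star_def, Complex.conj_ofReal]
    congr 3 <;> push_cast [← h₁] <;> ring
  · omega
  · omega
  · rw [star_zero]

lemma Jm_pow_eq_zero (N : ℕ) : Jm N ^ (N + 1) = 0 := by
  rw [Jm_eq_conjTranspose_Jp, ← conjTranspose_pow, Jp_pow_eq_zero, conjTranspose_zero]

lemma Jm_mulVec_fockVec_zero (N : ℕ) : Jm N *ᵥ fockVec N 0 = 0 := by
  ext i
  rw [fockVec_zero, mulVec_single_one]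
  simp [Jm]

lemma star_sum_smul_fockVec_dotProduct {N : ℕ} (s : Finset ℕ) {f : ℕ → ℕ} (hf : Set.InjOn f s)
    (hs : ∀ i ∈ s, f i ≤ N) (α : ℕ → ℂ) :
    star (∑ i ∈ s, α i • fockVec N (f i)) ⬝ᵥ ∑ i ∈ s, α i • fockVec N (f i) =
      ∑ i ∈ s, star (α i) * α i := by
  rw [star_sum, sum_dotProduct]
  refine sum_congr rfl fun i hi => ?_
  simp only [dotProduct_sum, star_smul, smul_dotProduct, dotProduct_smul,
    star_fockVec_dotProduct_fockVec (hs i hi), smul_eq_mul]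
  rw [sum_eq_single_of_mem i hi fun j hj hji => by rw [if_neg fun h => hji (hf hj hi h.symm)]; simp]
  simp [mul_comm]

lemma exp_smul_Jp_sq_mulVec_fockVec_zero (N : ℕ) (c : ℂ) :
    NormedSpace.exp (c • Jp N ^ 2) *ᵥ fockVec N 0 =
      ∑ i ∈ range (N / 2 + 1),
        ((i !⁻¹ : ℂ) * c ^ i * ((∏ n ∈ range (2 * i), raisingCoeff N n : ℝ) : ℂ)) •
          fockVec N (2 * i) := by
  have hnil : (c • Jp N ^ 2) ^ (N / 2 + 1) = 0 := by
    rw [smul_pow, ← pow_mul, pow_eq_zero_of_le (by omega) (Jp_pow_eq_zero N), smul_zero]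
  rw [NormedSpace.exp_eq_sum_range_of_pow_eq_zero (𝕂 := ℂ) hnil, sum_mulVec]
  refine sum_congr rfl fun i _ => ?_
  simp only [smul_pow, ← pow_mul, smul_mulVec, Jp_pow_mulVec_fockVec, zero_add, smul_smul]

lemma prod_raisingCoeff_sq {N m : ℕ} (h : m ≤ N + 1) :
    (∏ n ∈ range m, raisingCoeff N n) ^ 2 = ∏ n ∈ range m, ((n + 1) * (N - n) : ℝ) := by
  rw [← prod_pow]
  refine prod_congr rfl fun n hn => Real.sq_sqrt ?_
  have : (n : ℝ) ≤ N := by exact_mod_cast (by simp only [mem_range] at hn; omega : n ≤ N)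
  nlinarith

/-- The factors `n = 2j, 2j + 1` contribute `16 (j + 1/2) (j + 1) (j - x/2) (j + (1 - x)/2)`. -/
lemma prod_range_two_mul_eq_ascPochhammer (x : ℝ) (m : ℕ) :
    ∏ n ∈ range (2 * m), ((n + 1) * (x - n)) =
      (ascPochhammer ℝ m).eval (1 / 2) * (ascPochhammer ℝ m).eval (-x / 2) *
        (ascPochhammer ℝ m).eval ((1 - x) / 2) * 16 ^ m * m ! := by
  induction m with
  | zero => simp
  | succ m ih =>
    rw [mul_add_one, prod_range_succ, prod_range_succ, ih, ascPochhammer_succ_eval,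
      ascPochhammer_succ_eval, ascPochhammer_succ_eval, Nat.factorial_succ]
    push_cast
    ring

lemma star_exp_smul_Jp_sq_mulVec_dotProduct (N : ℕ) (c : ℂ) :
    star (NormedSpace.exp (c • Jp N ^ 2) *ᵥ fockVec N 0) ⬝ᵥ
        (NormedSpace.exp (c • Jp N ^ 2) *ᵥ fockVec N 0) =
      ((∑ i ∈ range (N / 2 + 1),
        (‖c‖ ^ 2) ^ i * (∏ n ∈ range (2 * i), ((n + 1) * (N - n) : ℝ)) / (i ! : ℝ) ^ 2 : ℝ) : ℂ) := by
  rw [exp_smul_Jp_sq_mulVec_fockVec_zero,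
    star_sum_smul_fockVec_dotProduct _ (fun _ _ _ _ h => by omega)
      (fun i hi => by simp only [mem_range] at hi; omega), Complex.ofReal_sum]
  refine sum_congr rfl fun i hi => ?_
  rw [Complex.star_def, Complex.conj_mul', norm_mul, norm_mul, norm_inv, norm_pow,
    Complex.norm_natCast, Complex.norm_real, Real.norm_eq_abs, ← Complex.ofReal_pow,
    Complex.ofReal_inj, mul_pow, mul_pow, sq_abs, prod_raisingCoeff_sq (by simp only [mem_range] at hi; omega)]
  ring

open Nat Matrix in
/-- The squeezed-vacuum normalization:
`κ(r) = ⟨0|S(ξ)†S(ξ)|0⟩ = ₃F₀(1/2, -N/2, (1-N)/2 ;; 4r²)` with `ξ = r e^{iγ}`. -/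
theorem squeeze_vacuum_norm (N : ℕ) (r γ : ℝ) :
    ((NormedSpace.exp (((r : ℂ) * Complex.exp (Complex.I * γ) / 2) • (Jp N) ^ 2) *
          NormedSpace.exp
            ((-(starRingEnd ℂ) ((r : ℂ) * Complex.exp (Complex.I * γ)) / 2) •
              (Jm N) ^ 2))ᴴ *
        (NormedSpace.exp (((r : ℂ) * Complex.exp (Complex.I * γ) / 2) • (Jp N) ^ 2) *
          NormedSpace.exp
            ((-(starRingEnd ℂ) ((r : ℂ) * Complex.exp (Complex.I * γ)) / 2) •
              (Jm N) ^ 2))) 0 0 =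
      ((∑ i ∈ Finset.range (N / 2 + 1),
          (ascPochhammer ℝ i).eval (1 / 2 : ℝ) * (ascPochhammer ℝ i).eval (-(N : ℝ) / 2) *
            (ascPochhammer ℝ i).eval ((1 - (N : ℝ)) / 2) * (4 * r ^ 2) ^ i / (i ! : ℝ) : ℝ) :
        ℂ) := by
  set ξ : ℂ := (r : ℂ) * Complex.exp (Complex.I * γ)
  set S := NormedSpace.exp ((ξ / 2) • Jp N ^ 2) *
    NormedSpace.exp ((-(starRingEnd ℂ) ξ / 2) • Jm N ^ 2)
  have hJm : IsNilpotent ((-(starRingEnd ℂ) ξ / 2) • Jm N ^ 2) :=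
    (IsNilpotent.pow_of_pos ⟨N + 1, Jm_pow_eq_zero N⟩ two_ne_zero).smul _
  have hJm_vac : ((-(starRingEnd ℂ) ξ / 2) • Jm N ^ 2) *ᵥ fockVec N 0 = 0 := by
    rw [smul_mulVec, pow_two, ← mulVec_mulVec, Jm_mulVec_fockVec_zero, mulVec_zero, smul_zero]
  have hvac : S *ᵥ fockVec N 0 = NormedSpace.exp ((ξ / 2) • Jp N ^ 2) *ᵥ fockVec N 0 := by
    rw [← mulVec_mulVec, exp_mulVec_of_mulVec_eq_zero hJm hJm_vac]
  have hξ : ‖ξ / 2‖ ^ 2 = r ^ 2 / 4 := by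
    rw [norm_div, Complex.norm_mul, mul_comm Complex.I, Complex.norm_exp_ofReal_mul_I,
      Complex.norm_real, Real.norm_eq_abs, Complex.norm_two, mul_one, div_pow, sq_abs]
    norm_num
  calc (Sᴴ * S) 0 0 = star (S *ᵥ fockVec N 0) ⬝ᵥ (S *ᵥ fockVec N 0) := by
        rw [fockVec_zero, mulVec_single_one]; rfl
    _ = _ := by
      rw [hvac, star_exp_smul_Jp_sq_mulVec_dotProduct, hξ, Complex.ofReal_inj]
      refine sum_congr rfl fun i _ => ?_
      rw [prod_range_two_mul_eq_ascPochhammer, show (16 : ℝ) = 4 * 4 by norm_num]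
      simp only [div_pow, mul_pow]
      field_simp
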